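/- arXiv:2212.10871 — 2 statements merged into one kernel-verified Lean document; each statement's English description precedes it below -/
import Mathlib

section
/- Let (p_k)_{k≥0} be a critical offspring distribution with variance σ² ∈ (0,∞) and pgf Φ. Then for every complex α with Re α < 1/2, the series μ(α) = ∑_{n≥1} n^α q_n converges absolutely and μ(α) = Γ(1−α)^{-1} ∫_0^1 [log(Φ(η)/η)]^{−α} dη, where for η ∈ (0,1) one has Φ(η)/η > 1 so that [log(Φ(η)/η)]^{−α} = exp(−α·log log(Φ(η)/η)) is well defined. -/
/-!
Write `Φ` and `Y` for the generating functions of `p` and `q` and put `g t = Y (e^{-t})`. The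
fixed-point equation `Y z = z Φ (Y z)` says that `u x = log (Φ x / x)` inverts `g`, and `g` maps
`(0, ∞)` onto `(0, 1)`: for surjectivity, `Y (x / Φ x) = x` because both sides are fixed points of
`y ↦ (x / Φ x) Φ y`, a contraction since criticality makes `Φ` 1-Lipschitz on `[0, 1]`.
As `-g' t = ∑ n q_n e^{-nt}`, the substitution `x = g t` turns `∫_0^1 u^{-α}` into the Mellin
transform at `1 - α` of `∑ n q_n e^{-nt}`, which is `Γ(1 - α) ∑ n^α q_n` term by term.

Convergence: positive variance gives some `k ≥ 2` with `p_k > 0`, whence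
`p_k (1 - x)² ≤ u x ≤ -log x`, so `u^{-Re α}` is integrable on `(0, 1)` when `Re α < 1/2`; the
terms being nonnegative, this integral bounds the partial sums of `∑ n^{Re α} q_n`.
-/

open MeasureTheory Set Real

noncomputable def pgf (a : ℕ → ℝ) (x : ℝ) : ℝ := ∑' k, a k * x ^ k

noncomputable def laplaceSeries (a : ℕ → ℝ) (t : ℝ) : ℝ := ∑' n, a n * exp (-(n * t))

lemma pow_sub_pow_le_natCast_mul_sub (k : ℕ) {a b : ℝ} (ha : 0 ≤ a) (hab : a ≤ b) (hb : b ≤ 1) :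
    b ^ k - a ^ k ≤ k * (b - a) :=
  calc b ^ k - a ^ k ≤ |b ^ k - a ^ k| := le_abs_self _
    _ ≤ |b - a| * k * max |b| |a| ^ (k - 1) := abs_pow_sub_pow_le b a k
    _ ≤ (b - a) * k * 1 := by
      rw [abs_of_nonneg (sub_nonneg.2 hab)]
      gcongr
      exact pow_le_one₀ (le_max_of_le_left (abs_nonneg b))
        (max_le (by rwa [abs_of_nonneg (ha.trans hab)]) (by rw [abs_of_nonneg ha]; linarith))
    _ = k * (b - a) := by ring

lemma sq_one_sub_le_pow_sub_one_add {k : ℕ} (hk : 2 ≤ k) {x : ℝ} (hx0 : 0 ≤ x) (hx1 : x ≤ 1) :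
    (1 - x) ^ 2 ≤ x ^ k - 1 + k * (1 - x) := by
  induction k, hk using Nat.le_induction with
  | base => exact le_of_eq (by push_cast; ring)
  | succ n _ ih =>
    -- passing from `k = n` to `k = n + 1` adds `(1 - x) * (1 - x ^ n)`
    have : 0 ≤ (1 - x) * (1 - x ^ n) :=
      mul_nonneg (by linarith) (by linarith [pow_le_one₀ hx0 hx1 (n := n)])
    push_cast
    nlinarith [pow_succ x n]

section Pgf

variable {a : ℕ → ℝ} {x y : ℝ}

lemma summable_mul_pow (ha : ∀ k, 0 ≤ a k) (hs : Summable a) (hx0 : 0 ≤ x) (hx1 : x ≤ 1) :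
    Summable fun k => a k * x ^ k :=
  hs.of_nonneg_of_le (fun k => mul_nonneg (ha k) (pow_nonneg hx0 k))
    (fun k => mul_le_of_le_one_right (ha k) (pow_le_one₀ hx0 hx1))

lemma pgf_nonneg (ha : ∀ k, 0 ≤ a k) (hx : 0 ≤ x) : 0 ≤ pgf a x :=
  tsum_nonneg fun k => mul_nonneg (ha k) (pow_nonneg hx k)

lemma pgf_le_one (ha : ∀ k, 0 ≤ a k) (h1 : HasSum a 1) (hx0 : 0 ≤ x) (hx1 : x ≤ 1) :
    pgf a x ≤ 1 :=
  hasSum_le (fun k => mul_le_of_le_one_right (ha k) (pow_le_one₀ hx0 hx1))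
    (summable_mul_pow ha h1.summable hx0 hx1).hasSum h1

lemma pgf_pos (ha : ∀ k, 0 ≤ a k) (hs : Summable a) {m : ℕ} (hm : 0 < a m) (hx0 : 0 < x)
    (hx1 : x ≤ 1) : 0 < pgf a x :=
  (mul_pos hm (pow_pos hx0 m)).trans_le <| (summable_mul_pow ha hs hx0.le hx1).le_tsum m
    fun k _ => mul_nonneg (ha k) (pow_nonneg hx0.le k)

lemma pgf_le_pgf (ha : ∀ k, 0 ≤ a k) (hs : Summable a) (hx : 0 ≤ x) (hxy : x ≤ y) (hy : y ≤ 1) :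
    pgf a x ≤ pgf a y :=
  (summable_mul_pow ha hs hx (hxy.trans hy)).tsum_le_tsum
    (fun k => mul_le_mul_of_nonneg_left (pow_le_pow_left₀ hx hxy k) (ha k))
    (summable_mul_pow ha hs (hx.trans hxy) hy)

end Pgf

lemma integrableOn_Ioo_one_sub_rpow {r : ℝ} (hr : -1 < r) :
    IntegrableOn (fun x : ℝ => (1 - x) ^ r) (Ioo 0 1) := by
  have h := (intervalIntegral.intervalIntegrable_rpow' (a := (0 : ℝ)) (b := 1) hr).comp_sub_left 1
  rw [sub_zero, sub_self] at h
  exact (intervalIntegrable_iff_integrableOn_Ioo_of_le zero_le_one).1 h.symm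

lemma integrableOn_Ioo_neg_log_rpow {γ : ℝ} (hγ : 0 ≤ γ) :
    IntegrableOn (fun x => (-log x) ^ γ) (Ioo 0 1) := by
  set ε := (γ + 1)⁻¹
  have hε : 0 < ε := by positivity
  have hεγ : -1 < -(ε * γ) := by
    rw [neg_lt_neg_iff, inv_mul_lt_iff₀ (by positivity)]
    linarith
  have hmaj := ((intervalIntegrable_iff_integrableOn_Ioo_of_le zero_le_one).1
    (intervalIntegral.intervalIntegrable_rpow' hεγ)).const_mul (ε⁻¹ ^ γ)
  refine hmaj.mono' (measurable_log.neg.pow_const γ).aestronglyMeasurable ?_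
  filter_upwards [ae_restrict_mem measurableSet_Ioo] with x hx
  have hlog : 0 ≤ -log x := neg_nonneg.2 (log_nonpos hx.1.le hx.2.le)
  have hbound : -log x ≤ ε⁻¹ * x ^ (-ε) := by
    have := log_le_rpow_div (inv_nonneg.2 hx.1.le) hε
    rw [log_inv, inv_rpow hx.1.le, ← rpow_neg hx.1.le] at this
    linarith [div_eq_inv_mul (x ^ (-ε)) ε]
  rw [norm_of_nonneg (rpow_nonneg hlog γ)]
  calc (-log x) ^ γ ≤ (ε⁻¹ * x ^ (-ε)) ^ γ := rpow_le_rpow hlog hbound hγ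
    _ = ε⁻¹ ^ γ * x ^ (-(ε * γ)) := by
      rw [mul_rpow (by positivity) (rpow_nonneg hx.1.le _), ← rpow_mul hx.1.le, neg_mul]

lemma integrableOn_rpow_of_sq_le_of_le_neg_log {u : ℝ → ℝ} {c β : ℝ} (hc : 0 < c) (hβ : β < 1 / 2)
    (hu : ContinuousOn u (Ioo 0 1)) (hlow : ∀ x ∈ Ioo 0 1, c * (1 - x) ^ 2 ≤ u x)
    (hupp : ∀ x ∈ Ioo 0 1, u x ≤ -log x) : IntegrableOn (fun x => u x ^ (-β)) (Ioo 0 1) := by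
  have hpos : ∀ x ∈ Ioo (0 : ℝ) 1, 0 < c * (1 - x) ^ 2 :=
    fun x hx => mul_pos hc (pow_pos (sub_pos.2 hx.2) 2)
  have hmeas : AEStronglyMeasurable (fun x => u x ^ (-β)) (volume.restrict (Ioo 0 1)) :=
    (hu.rpow_const fun x hx => Or.inl ((hpos x hx).trans_le (hlow x hx)).ne').aestronglyMeasurable
      measurableSet_Ioo
  rcases le_or_gt β 0 with hβ0 | hβ0
  · refine (integrableOn_Ioo_neg_log_rpow (neg_nonneg.2 hβ0)).mono' hmeas ?_
    filter_upwards [ae_restrict_mem measurableSet_Ioo] with x hx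
    have hux := (hpos x hx).trans_le (hlow x hx)
    rw [norm_of_nonneg (rpow_nonneg hux.le _)]
    exact rpow_le_rpow hux.le (hupp x hx) (by linarith)
  · refine ((integrableOn_Ioo_one_sub_rpow (r := -(2 * β)) (by linarith)).const_mul
      (c ^ (-β))).mono' hmeas ?_
    filter_upwards [ae_restrict_mem measurableSet_Ioo] with x hx
    rw [norm_of_nonneg (rpow_nonneg ((hpos x hx).trans_le (hlow x hx)).le _)]
    calc u x ^ (-β) ≤ (c * (1 - x) ^ 2) ^ (-β) :=
          rpow_le_rpow_of_nonpos (hpos x hx) (hlow x hx) (by linarith)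
      _ = c ^ (-β) * (1 - x) ^ (-(2 * β)) := by
        rw [mul_rpow hc.le (by positivity), ← rpow_natCast, ← rpow_mul (sub_pos.2 hx.2).le]
        push_cast
        ring_nf

structure IsCriticalOffspring (p : ℕ → ℝ) : Prop where
  nonneg : ∀ k, 0 ≤ p k
  hasSum_one : HasSum p 1
  hasSum_mean : HasSum (fun k : ℕ => (k : ℝ) * p k) 1

namespace IsCriticalOffspring

variable {p : ℕ → ℝ} {x : ℝ}

lemma summable_mul_pow (hp : IsCriticalOffspring p) (hx0 : 0 ≤ x) (hx1 : x ≤ 1) :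
    Summable fun k => p k * x ^ k :=
  _root_.summable_mul_pow hp.nonneg hp.hasSum_one.summable hx0 hx1

lemma pgf_le_one (hp : IsCriticalOffspring p) (hx0 : 0 ≤ x) (hx1 : x ≤ 1) : pgf p x ≤ 1 :=
  _root_.pgf_le_one hp.nonneg hp.hasSum_one hx0 hx1

lemma pgf_sub_pgf_le (hp : IsCriticalOffspring p) {a b : ℝ} (ha : 0 ≤ a) (hab : a ≤ b)
    (hb : b ≤ 1) : pgf p b - pgf p a ≤ b - a := by
  have hterm : ∀ k, p k * b ^ k ≤ p k * a ^ k + (b - a) * (k * p k) := fun k => by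
    nlinarith [mul_le_mul_of_nonneg_left (pow_sub_pow_le_natCast_mul_sub k ha hab hb) (hp.nonneg k)]
  have := hasSum_le hterm (hp.summable_mul_pow (ha.trans hab) hb).hasSum
    ((hp.summable_mul_pow ha (hab.trans hb)).hasSum.add (hp.hasSum_mean.mul_left (b - a)))
  rw [mul_one] at this
  unfold pgf
  linarith

lemma lipschitzOnWith_pgf (hp : IsCriticalOffspring p) : LipschitzOnWith 1 (pgf p) (Icc 0 1) := by
  have key : ∀ a ∈ Icc (0 : ℝ) 1, ∀ b ∈ Icc (0 : ℝ) 1, a ≤ b → |pgf p b - pgf p a| ≤ |b - a| :=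
    fun a ha b hb hab => by
      rw [abs_of_nonneg (sub_nonneg.2 (pgf_le_pgf hp.nonneg hp.hasSum_one.summable ha.1 hab hb.2)),
        abs_of_nonneg (sub_nonneg.2 hab)]
      exact hp.pgf_sub_pgf_le ha.1 hab hb.2
  refine LipschitzOnWith.of_dist_le_mul fun a ha b hb => ?_
  rw [NNReal.coe_one, one_mul, Real.dist_eq, Real.dist_eq]
  rcases le_total a b with hab | hba
  · rw [abs_sub_comm, abs_sub_comm a]; exact key a ha b hb hab
  · exact key b hb a ha hba

lemma mul_sq_le_pgf_sub_self (hp : IsCriticalOffspring p) {k : ℕ} (hk : 2 ≤ k) (hx0 : 0 ≤ x)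
    (hx1 : x ≤ 1) : p k * (1 - x) ^ 2 ≤ pgf p x - x := by
  have hsum : HasSum (fun j : ℕ => p j * (x ^ j - 1 + j * (1 - x))) (pgf p x - 1 + (1 - x) * 1) :=
    (((hp.summable_mul_pow hx0 hx1).hasSum.sub hp.hasSum_one).add
      (hp.hasSum_mean.mul_left (1 - x))).congr_fun fun j => by ring
  rw [show pgf p x - 1 + (1 - x) * 1 = pgf p x - x by ring] at hsum
  calc p k * (1 - x) ^ 2 ≤ p k * (x ^ k - 1 + k * (1 - x)) :=
        mul_le_mul_of_nonneg_left (sq_one_sub_le_pow_sub_one_add hk hx0 hx1) (hp.nonneg k)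
    _ ≤ pgf p x - x := le_hasSum hsum k fun j _ => mul_nonneg (hp.nonneg j) <| by
        have bernoulli := one_add_mul_le_pow (a := x - 1) (by linarith) j
        rw [add_sub_cancel] at bernoulli
        linarith

lemma lt_pgf (hp : IsCriticalOffspring p) {k : ℕ} (hk : 2 ≤ k) (hpk : 0 < p k) (hx0 : 0 ≤ x)
    (hx1 : x < 1) : x < pgf p x := by
  have := hp.mul_sq_le_pgf_sub_self hk hx0 hx1.le
  nlinarith [mul_pos hpk (pow_pos (sub_pos.2 hx1) 2)]

lemma mul_sq_le_log_pgf_div (hp : IsCriticalOffspring p) {k : ℕ} (hk : 2 ≤ k) (hpk : 0 < p k)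
    (hx : x ∈ Ioo 0 1) : p k * (1 - x) ^ 2 ≤ log (pgf p x / x) := by
  have hxP := hp.lt_pgf hk hpk hx.1.le hx.2
  have hP1 := hp.pgf_le_one hx.1.le hx.2.le
  have hP0 : 0 < pgf p x := hx.1.trans hxP
  calc p k * (1 - x) ^ 2 ≤ pgf p x - x := hp.mul_sq_le_pgf_sub_self hk hx.1.le hx.2.le
    _ ≤ (pgf p x - x) / pgf p x := le_div_self (by linarith) hP0 hP1
    _ = 1 - (pgf p x / x)⁻¹ := by field_simp
    _ ≤ log (pgf p x / x) := one_sub_inv_le_log_of_pos (div_pos hP0 hx.1)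

lemma log_pgf_div_le (hp : IsCriticalOffspring p) {k : ℕ} (hk : 2 ≤ k) (hpk : 0 < p k)
    (hx : x ∈ Ioo 0 1) : log (pgf p x / x) ≤ -log x := by
  have hP0 : 0 < pgf p x := hx.1.trans (hp.lt_pgf hk hpk hx.1.le hx.2)
  rw [log_div hP0.ne' hx.1.ne']
  linarith [log_nonpos hP0.le (hp.pgf_le_one hx.1.le hx.2.le)]

lemma integrableOn_log_pgf_div_rpow (hp : IsCriticalOffspring p) {k : ℕ} (hk : 2 ≤ k)
    (hpk : 0 < p k) {β : ℝ} (hβ : β < 1 / 2) :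
    IntegrableOn (fun x => log (pgf p x / x) ^ (-β)) (Ioo 0 1) := by
  have hP0 : ∀ x ∈ Ioo (0 : ℝ) 1, 0 < pgf p x :=
    fun x hx => hx.1.trans (hp.lt_pgf hk hpk hx.1.le hx.2)
  refine integrableOn_rpow_of_sq_le_of_le_neg_log hpk hβ ?_
    (fun x hx => hp.mul_sq_le_log_pgf_div hk hpk hx) (fun x hx => hp.log_pgf_div_le hk hpk hx)
  exact ((hp.lipschitzOnWith_pgf.continuousOn.mono Ioo_subset_Icc_self).div continuousOn_id
    fun x hx => hx.1.ne').log fun x hx => (div_pos (hP0 x hx) hx.1).ne'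

end IsCriticalOffspring

lemma eq_of_eq_mul_of_lipschitzOnWith {f : ℝ → ℝ} {s : Set ℝ} (hf : LipschitzOnWith 1 f s)
    {z x y : ℝ} (hz0 : 0 ≤ z) (hz1 : z < 1) (hx : x ∈ s) (hy : y ∈ s) (hfx : x = z * f x)
    (hfy : y = z * f y) : x = y := by
  have hdist : |x - y| ≤ z * |x - y| :=
    calc |x - y| = z * |f x - f y| := by
          rw [← abs_of_nonneg hz0, ← abs_mul]
          exact congrArg abs (by linear_combination hfx - hfy)
      _ ≤ z * |x - y| := by
          have := hf.dist_le_mul x hx y hy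
          rw [NNReal.coe_one, one_mul, Real.dist_eq, Real.dist_eq] at this
          exact mul_le_mul_of_nonneg_left this hz0
  have : |x - y| = 0 := by nlinarith [abs_nonneg (x - y)]
  exact sub_eq_zero.1 (abs_eq_zero.1 this)

structure IsTreeSizeLaw (p q : ℕ → ℝ) : Prop where
  nonneg : ∀ n, 0 ≤ q n
  hasSum_one : HasSum q 1
  pgf_eq : ∀ z ∈ Icc (0 : ℝ) 1, pgf q z = z * pgf p (pgf q z)

namespace IsTreeSizeLaw

variable {p q : ℕ → ℝ} {z : ℝ}

lemma le_one (hq : IsTreeSizeLaw p q) (n : ℕ) : q n ≤ 1 :=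
  le_hasSum hq.hasSum_one n fun j _ => hq.nonneg j

lemma pgf_mem_Icc (hq : IsTreeSizeLaw p q) (hz0 : 0 ≤ z) (hz1 : z ≤ 1) : pgf q z ∈ Icc 0 1 :=
  ⟨pgf_nonneg hq.nonneg hz0, pgf_le_one hq.nonneg hq.hasSum_one hz0 hz1⟩

lemma pgf_pos (hq : IsTreeSizeLaw p q) (hz0 : 0 < z) (hz1 : z ≤ 1) : 0 < pgf q z := by
  obtain ⟨m, hm⟩ : ∃ m, 0 < q m := by
    by_contra! h
    have hzero : q = 0 := funext fun n => le_antisymm (h n) (hq.nonneg n)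
    exact one_ne_zero (hq.hasSum_one.unique (hzero ▸ hasSum_zero))
  exact _root_.pgf_pos hq.nonneg hq.hasSum_one.summable hm hz0 hz1

lemma pgf_lt_one (hq : IsTreeSizeLaw p q) (hp : IsCriticalOffspring p) (hz0 : 0 ≤ z)
    (hz1 : z < 1) : pgf q z < 1 := by
  have hY := hq.pgf_mem_Icc hz0 hz1.le
  rw [hq.pgf_eq z ⟨hz0, hz1.le⟩]
  calc z * pgf p (pgf q z) ≤ z * 1 := mul_le_mul_of_nonneg_left (hp.pgf_le_one hY.1 hY.2) hz0
    _ < 1 := by linarith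

lemma pgf_div_pgf (hq : IsTreeSizeLaw p q) (hp : IsCriticalOffspring p) {k : ℕ} (hk : 2 ≤ k)
    (hpk : 0 < p k) {x : ℝ} (hx : x ∈ Ioo 0 1) : pgf q (x / pgf p x) = x := by
  have hxP := hp.lt_pgf hk hpk hx.1.le hx.2
  have hP0 : 0 < pgf p x := hx.1.trans hxP
  have hz0 : 0 ≤ x / pgf p x := (div_pos hx.1 hP0).le
  have hz1 : x / pgf p x < 1 := (div_lt_one hP0).2 hxP
  -- both sides are fixed points of the contraction `y ↦ (x / Φ x) * Φ y`
  exact eq_of_eq_mul_of_lipschitzOnWith hp.lipschitzOnWith_pgf hz0 hz1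
    (hq.pgf_mem_Icc hz0 hz1.le) ⟨hx.1.le, hx.2.le⟩ (hq.pgf_eq _ ⟨hz0, hz1.le⟩) (by field_simp)

end IsTreeSizeLaw

section LaplaceSeries

variable {a : ℕ → ℝ} {t : ℝ}

lemma laplaceSeries_eq_pgf (a : ℕ → ℝ) (t : ℝ) : laplaceSeries a t = pgf a (exp (-t)) := by
  unfold laplaceSeries pgf
  congr! 2 with n
  rw [← exp_nat_mul, mul_neg]

lemma laplaceSeries_nonneg (ha : ∀ n, 0 ≤ a n) : 0 ≤ laplaceSeries a t :=
  tsum_nonneg fun n => mul_nonneg (ha n) (exp_pos _).le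

lemma summable_mul_exp_neg_mul {C : ℝ} {k : ℕ} (ha : ∀ n, |a n| ≤ C * n ^ k) (ht : 0 < t) :
    Summable fun n => a n * exp (-(n * t)) := by
  have hr : ‖exp (-t)‖ < 1 := by
    rw [norm_of_nonneg (exp_pos _).le, exp_lt_one_iff]
    linarith
  refine ((summable_pow_mul_geometric_of_norm_lt_one k hr).mul_left C).of_norm_bounded fun n => ?_
  rw [norm_mul, norm_of_nonneg (exp_pos _).le, ← mul_assoc, ← exp_nat_mul, mul_neg]
  exact mul_le_mul_of_nonneg_right (ha n) (exp_pos _).le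

lemma hasDerivAt_laplaceSeries {C : ℝ} (ha : ∀ n, |a n| ≤ C) (ht : 0 < t) :
    HasDerivAt (laplaceSeries a) (-laplaceSeries (fun n => n * a n) t) t := by
  have hbound : ∀ n : ℕ, |(n : ℝ) * a n| ≤ C * n ^ 1 := fun n => by
    rw [abs_mul, Nat.abs_cast, pow_one, mul_comm]
    exact mul_le_mul_of_nonneg_right (ha n) n.cast_nonneg
  have hderiv : ∀ (n : ℕ), ∀ y ∈ Ioi (t / 2), HasDerivAt (fun s => a n * exp (-(n * s)))
      (-(n * a n * exp (-(n * y)))) y := fun n y _ => by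
    refine (((hasDerivAt_id y).const_mul (n : ℝ)).neg.exp.const_mul (a n)).congr_deriv ?_
    simp only [id_eq, mul_one, Pi.neg_apply]
    ring
  have hle : ∀ (n : ℕ), ∀ y ∈ Ioi (t / 2), ‖-(n * a n * exp (-(n * y)))‖ ≤
      |(n : ℝ) * a n| * exp (-(n * (t / 2))) := fun n y hy => by
    rw [norm_neg, norm_mul, norm_of_nonneg (exp_pos _).le, Real.norm_eq_abs]
    gcongr
    exact (mem_Ioi.1 hy).le
  have hD := hasDerivAt_tsum_of_isPreconnected
    ((summable_mul_exp_neg_mul hbound (half_pos ht)).abs.congr fun n => by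
      rw [abs_mul, abs_of_pos (exp_pos _)])
    isOpen_Ioi isPreconnected_Ioi hderiv hle (by simp [ht] : t ∈ Ioi (t / 2))
    (summable_mul_exp_neg_mul (k := 0) (by simpa using ha) ht) (by simp [ht] : t ∈ Ioi (t / 2))
  unfold laplaceSeries
  rwa [← tsum_neg]

end LaplaceSeries

section ChangeOfVariables

variable {E : Type*} [NormedAddCommGroup E] [NormedSpace ℝ E] {g F u : ℝ → ℝ} {s : Set ℝ}

lemma integral_image_comp_of_leftInvOn (hs : MeasurableSet s)
    (hg : ∀ t ∈ s, HasDerivWithinAt g (-F t) s t) (hF : ∀ t ∈ s, 0 ≤ F t) (hu : LeftInvOn u g s)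
    (h : ℝ → E) : ∫ x in g '' s, h (u x) = ∫ t in s, F t • h t := by
  rw [integral_image_eq_integral_abs_deriv_smul hs hg hu.injOn]
  exact setIntegral_congr_fun hs fun t ht => by rw [abs_neg, abs_of_nonneg (hF t ht), hu ht]

lemma integrableOn_image_comp_iff_of_leftInvOn (hs : MeasurableSet s)
    (hg : ∀ t ∈ s, HasDerivWithinAt g (-F t) s t) (hF : ∀ t ∈ s, 0 ≤ F t) (hu : LeftInvOn u g s)
    (h : ℝ → E) :
    IntegrableOn (fun x => h (u x)) (g '' s) ↔ IntegrableOn (fun t => F t • h t) s := by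
  rw [integrableOn_image_iff_integrableOn_abs_deriv_smul hs hg hu.injOn]
  exact integrableOn_congr_fun (fun t ht => by rw [abs_neg, abs_of_nonneg (hF t ht), hu ht]) hs

end ChangeOfVariables

namespace IsTreeSizeLaw

variable {p q : ℕ → ℝ} {t : ℝ}

lemma log_pgf_div_laplaceSeries (hq : IsTreeSizeLaw p q) (ht : 0 < t) :
    log (pgf p (laplaceSeries q t) / laplaceSeries q t) = t := by
  have hz1 : exp (-t) ≤ 1 := exp_le_one_iff.2 (by linarith)
  have hY := hq.pgf_pos (exp_pos (-t)) hz1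
  have hfix := hq.pgf_eq _ ⟨(exp_pos (-t)).le, hz1⟩
  rw [laplaceSeries_eq_pgf]
  refine (congrArg log ?_).trans (log_exp t)
  rw [div_eq_iff hY.ne']
  calc pgf p (pgf q (exp (-t))) = exp t * exp (-t) * pgf p (pgf q (exp (-t))) := by
        rw [← exp_add, add_neg_cancel, exp_zero, one_mul]
    _ = exp t * pgf q (exp (-t)) := by rw [mul_assoc, ← hfix]

lemma image_laplaceSeries (hq : IsTreeSizeLaw p q) (hp : IsCriticalOffspring p) {k : ℕ}
    (hk : 2 ≤ k) (hpk : 0 < p k) : laplaceSeries q '' Ioi 0 = Ioo 0 1 := by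
  refine Subset.antisymm ?_ fun x hx => ?_
  · rintro _ ⟨t, ht, rfl⟩
    rw [laplaceSeries_eq_pgf]
    exact ⟨hq.pgf_pos (exp_pos _) (exp_le_one_iff.2 (neg_nonpos.2 (le_of_lt ht))),
      hq.pgf_lt_one hp (exp_pos _).le (exp_lt_one_iff.2 (neg_lt_zero.2 ht))⟩
  · have hxP := hp.lt_pgf hk hpk hx.1.le hx.2
    refine ⟨log (pgf p x / x), log_pos ((one_lt_div hx.1).2 hxP), ?_⟩
    rw [laplaceSeries_eq_pgf, exp_neg, exp_log (div_pos (hx.1.trans hxP) hx.1), inv_div]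
    exact hq.pgf_div_pgf hp hk hpk hx

lemma hasDerivAt_laplaceSeries (hq : IsTreeSizeLaw p q) (ht : 0 < t) :
    HasDerivAt (laplaceSeries q) (-laplaceSeries (fun n => n * q n) t) t :=
  _root_.hasDerivAt_laplaceSeries (C := 1)
    (fun n => by rw [abs_of_nonneg (hq.nonneg n)]; exact hq.le_one n) ht

variable {E : Type*} [NormedAddCommGroup E] [NormedSpace ℝ E]

lemma integral_log_pgf_div (hq : IsTreeSizeLaw p q) (hp : IsCriticalOffspring p) {k : ℕ}
    (hk : 2 ≤ k) (hpk : 0 < p k) (h : ℝ → E) :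
    ∫ x in Ioo 0 1, h (log (pgf p x / x)) =
      ∫ t in Ioi 0, laplaceSeries (fun n => n * q n) t • h t := by
  rw [← hq.image_laplaceSeries hp hk hpk]
  exact integral_image_comp_of_leftInvOn measurableSet_Ioi
    (fun t ht => (hq.hasDerivAt_laplaceSeries ht).hasDerivWithinAt)
    (fun t _ => laplaceSeries_nonneg fun n => mul_nonneg n.cast_nonneg (hq.nonneg n))
    (fun t ht => hq.log_pgf_div_laplaceSeries ht) h

lemma integrableOn_log_pgf_div_iff (hq : IsTreeSizeLaw p q) (hp : IsCriticalOffspring p) {k : ℕ}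
    (hk : 2 ≤ k) (hpk : 0 < p k) (h : ℝ → E) :
    IntegrableOn (fun x => h (log (pgf p x / x))) (Ioo 0 1) ↔
      IntegrableOn (fun t => laplaceSeries (fun n => n * q n) t • h t) (Ioi 0) := by
  rw [← hq.image_laplaceSeries hp hk hpk]
  exact integrableOn_image_comp_iff_of_leftInvOn measurableSet_Ioi
    (fun t ht => (hq.hasDerivAt_laplaceSeries ht).hasDerivWithinAt)
    (fun t _ => laplaceSeries_nonneg fun n => mul_nonneg n.cast_nonneg (hq.nonneg n))
    (fun t ht => hq.log_pgf_div_laplaceSeries ht) h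

lemma integrableOn_laplaceSeries_mul_rpow (hq : IsTreeSizeLaw p q) (hp : IsCriticalOffspring p)
    {k : ℕ} (hk : 2 ≤ k) (hpk : 0 < p k) {β : ℝ} (hβ : β < 1 / 2) :
    IntegrableOn (fun t => laplaceSeries (fun n => n * q n) t * t ^ (-β)) (Ioi 0) :=
  (hq.integrableOn_log_pgf_div_iff hp hk hpk _).1 (hp.integrableOn_log_pgf_div_rpow hk hpk hβ)

lemma mellin_laplaceSeries (hq : IsTreeSizeLaw p q) (hp : IsCriticalOffspring p) {k : ℕ}
    (hk : 2 ≤ k) (hpk : 0 < p k) (α : ℂ) :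
    mellin (fun t => (laplaceSeries (fun n => n * q n) t : ℂ)) (1 - α) =
      ∫ x in Ioo 0 1, (log (pgf p x / x) : ℂ) ^ (-α) := by
  refine (setIntegral_congr_fun measurableSet_Ioi fun t _ => ?_).trans
    (hq.integral_log_pgf_div hp hk hpk fun t => (t : ℂ) ^ (-α)).symm
  rw [sub_sub_cancel_left, smul_eq_mul, Complex.real_smul, mul_comm]

lemma summable_natCast_mul_mul_exp (hq : IsTreeSizeLaw p q) (ht : 0 < t) :
    Summable fun n : ℕ => (n : ℝ) * q n * exp (-(n * t)) :=
  summable_mul_exp_neg_mul (C := 1) (k := 1) (fun n => by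
    rw [abs_of_nonneg (mul_nonneg n.cast_nonneg (hq.nonneg n)), one_mul, pow_one]
    exact mul_le_of_le_one_right n.cast_nonneg (hq.le_one n)) ht

end IsTreeSizeLaw

section Mellin

variable {a : ℕ → ℝ}

lemma integrableOn_mul_exp_neg_mul_mul_rpow (ha0 : a 0 = 0) {s : ℝ} (hs : 0 < s) (n : ℕ) :
    IntegrableOn (fun t => a n * exp (-(n * t)) * t ^ (s - 1)) (Ioi 0) := by
  rcases n.eq_zero_or_pos with rfl | hn
  · simp [ha0]
  refine IntegrableOn.congr_fun ((integrableOn_rpow_mul_exp_neg_mul_rpow (by linarith : -1 < s - 1)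
    one_pos (Nat.cast_pos.2 hn)).const_mul (a n)) (fun t _ => ?_) measurableSet_Ioi
  simp only [rpow_one, neg_mul]
  ring

lemma integral_mul_exp_neg_mul_mul_rpow (ha0 : a 0 = 0) {s : ℝ} (hs : 0 < s) (n : ℕ) :
    ∫ t in Ioi 0, a n * exp (-(n * t)) * t ^ (s - 1) = Gamma s * (a n / n ^ s) := by
  rcases n.eq_zero_or_pos with rfl | hn
  · simp [ha0]
  have hn' : (0 : ℝ) < n := Nat.cast_pos.2 hn
  calc ∫ t in Ioi 0, a n * exp (-(n * t)) * t ^ (s - 1)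
      = a n * ∫ t in Ioi 0, t ^ (s - 1) * exp (-(n * t)) := by
        rw [← integral_const_mul]
        exact setIntegral_congr_fun measurableSet_Ioi fun t _ => by ring
    _ = Gamma s * (a n / n ^ s) := by
        rw [integral_rpow_mul_exp_neg_mul_Ioi hs hn', one_div, inv_rpow hn'.le]
        ring

lemma summable_div_rpow_of_integrableOn (ha : ∀ n, 0 ≤ a n) (ha0 : a 0 = 0) {s : ℝ} (hs : 0 < s)
    (hsum : ∀ t > 0, Summable fun n => a n * exp (-(n * t)))
    (hint : IntegrableOn (fun t => laplaceSeries a t * t ^ (s - 1)) (Ioi 0)) :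
    Summable fun n => a n / n ^ s := by
  have hint_term := integrableOn_mul_exp_neg_mul_mul_rpow ha0 hs
  refine summable_of_sum_range_le (c := (∫ t in Ioi 0, laplaceSeries a t * t ^ (s - 1)) / Gamma s)
    (fun n => div_nonneg (ha n) (rpow_nonneg n.cast_nonneg s)) fun N => ?_
  rw [le_div_iff₀ (Gamma_pos_of_pos hs), Finset.sum_mul]
  calc ∑ n ∈ Finset.range N, a n / n ^ s * Gamma s
      = ∫ t in Ioi 0, ∑ n ∈ Finset.range N, a n * exp (-(n * t)) * t ^ (s - 1) := by
        rw [integral_finsetSum _ fun n _ => hint_term n]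
        exact Finset.sum_congr rfl fun n _ => by
          rw [integral_mul_exp_neg_mul_mul_rpow ha0 hs, mul_comm]
    _ ≤ ∫ t in Ioi 0, laplaceSeries a t * t ^ (s - 1) := by
        refine setIntegral_mono_on (integrable_finsetSum _ fun n _ => hint_term n) hint
          measurableSet_Ioi fun t ht => ?_
        rw [← Finset.sum_mul]
        exact mul_le_mul_of_nonneg_right ((hsum t ht).sum_le_tsum _
          fun n _ => mul_nonneg (ha n) (exp_pos _).le) (rpow_nonneg (le_of_lt ht) _)

lemma hasSum_mellin_laplaceSeries (ha : ∀ n, 0 ≤ a n) (ha0 : a 0 = 0) {s : ℂ} (hs : 0 < s.re)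
    (hsum : ∀ t > 0, Summable fun n => a n * exp (-(n * t)))
    (hint : IntegrableOn (fun t => laplaceSeries a t * t ^ (s.re - 1)) (Ioi 0)) :
    HasSum (fun n => Complex.Gamma s * a n / (n : ℂ) ^ s)
      (mellin (fun t => (laplaceSeries a t : ℂ)) s) := by
  have h := hasSum_mellin (a := fun n => (a n : ℂ)) (p := fun n => (n : ℝ))
    (F := fun t => (laplaceSeries a t : ℂ)) (fun n => ?_) hs (fun t ht => ?_) ?_
  · simpa only [Complex.ofReal_natCast] using h
  · rcases n.eq_zero_or_pos with rfl | hn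
    · exact Or.inl (by simp [ha0])
    · exact Or.inr (Nat.cast_pos.2 hn)
  · simpa only [Complex.ofReal_mul, neg_mul, laplaceSeries] using
      Complex.hasSum_ofReal.2 (hsum t ht).hasSum
  · refine (summable_div_rpow_of_integrableOn ha ha0 hs hsum hint).congr fun n => ?_
    rw [Complex.norm_real, norm_of_nonneg (ha n)]

end Mellin

lemma hasSum_of_tsum_eq_of_ne_zero {f : ℕ → ℝ} {a : ℝ} (h : ∑' k, f k = a) (ha : a ≠ 0) :
    HasSum f a := by
  by_cases hf : Summable f
  · exact h ▸ hf.hasSum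
  · exact absurd ((tsum_eq_zero_of_not_summable hf).symm.trans h) ha.symm

lemma exists_two_le_pos_of_variance_pos {p : ℕ → ℝ}
    (h : 0 < ∑' k : ℕ, (k : ℝ) * ((k : ℝ) - 1) * p k) : ∃ k, 2 ≤ k ∧ 0 < p k := by
  obtain ⟨k, hk⟩ : ∃ k : ℕ, 0 < (k : ℝ) * ((k : ℝ) - 1) * p k := by
    by_contra! h'
    exact h.not_ge (tsum_nonpos h')
  have h2 : 2 ≤ k := by
    by_contra! h'
    interval_cases k <;> simp at hk
  refine ⟨k, h2, pos_of_mul_pos_right hk (mul_nonneg k.cast_nonneg ?_)⟩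
  have : (2 : ℝ) ≤ k := by exact_mod_cast h2
  linarith

lemma natCast_cpow_mul_eq {q : ℕ → ℝ} (hq0 : q 0 = 0) (α : ℂ) (n : ℕ) :
    (n : ℂ) ^ α * q n = ((n * q n : ℝ) : ℂ) / (n : ℂ) ^ (1 - α) := by
  rcases n.eq_zero_or_pos with rfl | hn
  · simp [hq0]
  have hn' : (n : ℂ) ≠ 0 := Nat.cast_ne_zero.2 hn.ne'
  rw [Complex.cpow_sub _ _ hn', Complex.cpow_one]
  push_cast
  field_simp

lemma norm_natCast_cpow_mul_eq {q : ℕ → ℝ} (hq0 : q 0 = 0) (α : ℂ) {n : ℕ} (hqn : 0 ≤ q n) :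
    ‖(n : ℂ) ^ α * q n‖ = n * q n / n ^ (1 - α).re := by
  rw [natCast_cpow_mul_eq hq0, norm_div, Complex.norm_real,
    norm_of_nonneg (mul_nonneg n.cast_nonneg hqn)]
  rcases n.eq_zero_or_pos with rfl | hn
  · simp
  · rw [Complex.norm_natCast_cpow_of_pos hn]

theorem stmt5_general
    (p : ℕ → ℝ) (hp : ∀ k, 0 ≤ p k)
    (hpsum : ∑' k, p k = 1)
    (hcrit : ∑' k : ℕ, (k : ℝ) * p k = 1)
    (hσpos : 0 < ∑' k : ℕ, (k : ℝ) * ((k : ℝ) - 1) * p k)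
    (q : ℕ → ℝ) (hq0 : q 0 = 0) (hqnn : ∀ n, 0 ≤ q n)
    (hqsum : ∑' n, q n = 1)
    (hfix : ∀ z ∈ Set.Icc (0:ℝ) 1,
      (∑' n, q n * z ^ n) = z * ∑' k, p k * (∑' n, q n * z ^ n) ^ k)
    (α : ℂ) (hα : α.re < 1/2) :
    Summable (fun n : ℕ => ‖(n : ℂ) ^ α * (q n : ℂ)‖) ∧
    (∑' n : ℕ, (n : ℂ) ^ α * (q n : ℂ)) =
      (Complex.Gamma (1 - α))⁻¹ *
        ∫ η in (0:ℝ)..1, ((Real.log ((∑' k, p k * η ^ k) / η) : ℂ)) ^ (-α) := by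
  have hP : IsCriticalOffspring p := ⟨hp, hasSum_of_tsum_eq_of_ne_zero hpsum one_ne_zero,
    hasSum_of_tsum_eq_of_ne_zero hcrit one_ne_zero⟩
  have hQ : IsTreeSizeLaw p q := ⟨hqnn, hasSum_of_tsum_eq_of_ne_zero hqsum one_ne_zero, hfix⟩
  obtain ⟨k, hk, hpk⟩ := exists_two_le_pos_of_variance_pos hσpos
  have ha : ∀ n : ℕ, 0 ≤ (n : ℝ) * q n := fun n => mul_nonneg n.cast_nonneg (hqnn n)
  have hsum : ∀ t > 0, Summable fun n : ℕ => (n : ℝ) * q n * exp (-(n * t)) :=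
    fun _ => hQ.summable_natCast_mul_mul_exp
  have hs : 0 < (1 - α).re := by simp; linarith
  have hint : IntegrableOn (fun t => laplaceSeries (fun n => n * q n) t * t ^ ((1 - α).re - 1))
      (Ioi 0) := by
    rw [show (1 - α).re - 1 = -α.re by simp]
    exact hQ.integrableOn_laplaceSeries_mul_rpow hP hk hpk hα
  refine ⟨(summable_div_rpow_of_integrableOn ha (by simp) hs hsum hint).congr fun n =>
    (norm_natCast_cpow_mul_eq hq0 α (hqnn n)).symm, ?_⟩
  refine (((hasSum_mellin_laplaceSeries ha (by simp) hs hsum hint).mul_left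
    (Complex.Gamma (1 - α))⁻¹).congr_fun fun n => ?_).tsum_eq.trans ?_
  · rw [natCast_cpow_mul_eq hq0, mul_div_assoc,
      inv_mul_cancel_left₀ (Complex.Gamma_ne_zero_of_re_pos hs)]
  rw [intervalIntegral.integral_of_le zero_le_one, integral_Ioc_eq_integral_Ioo]
  exact congrArg _ (hQ.mellin_laplaceSeries hP hk hpk α)

/-- For a critical offspring distribution with variance `σ² ∈ (0,∞)` and pgf
`Φ`, for every complex `α` with `Re α < 1/2` the series `μ(α) = ∑ n^α q_n` converges
absolutely and `μ(α) = Γ(1−α)⁻¹ ∫_0^1 (log(Φ(η)/η))^{-α} dη`. -/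
theorem stmt5
    (p : ℕ → ℝ) (hp : ∀ k, 0 ≤ p k)
    (hpsum : ∑' k, p k = 1)
    (hcrit : ∑' k : ℕ, (k : ℝ) * p k = 1)
    (hσfin : Summable (fun k : ℕ => (k : ℝ) * ((k : ℝ) - 1) * p k))
    (hσpos : 0 < ∑' k : ℕ, (k : ℝ) * ((k : ℝ) - 1) * p k)
    (q : ℕ → ℝ) (hq0 : q 0 = 0) (hqnn : ∀ n, 0 ≤ q n)
    (hqsum : ∑' n, q n = 1)
    (hfix : ∀ z ∈ Set.Icc (0:ℝ) 1,
      (∑' n, q n * z ^ n) = z * ∑' k, p k * (∑' n, q n * z ^ n) ^ k)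
    (α : ℂ) (hα : α.re < 1/2) :
    Summable (fun n : ℕ => ‖(n : ℂ) ^ α * (q n : ℂ)‖) ∧
    (∑' n : ℕ, (n : ℂ) ^ α * (q n : ℂ)) =
      (Complex.Gamma (1 - α))⁻¹ *
        ∫ η in (0:ℝ)..1, ((Real.log ((∑' k, p k * η ^ k) / η) : ℂ)) ^ (-α) :=
  stmt5_general p hp hpsum hcrit hσpos q hq0 hqnn hqsum hfix α hα
end

section
/- Let (p_k^{(1)}) and (p_k^{(2)}) be critical offspring distributions, each with p_1 < 1, with pgfs Φ_1, Φ_2 and tree-size probabilities (q_n^{(1)}), (q_n^{(2)}). Then the following are equivalent: (a) for every integer m ≥ 1 and every real t > 0, ∑_{n≥1} q_n^{(1)} (n−1+t)^{−m} ≤ ∑_{n≥1} q_n^{(2)} (n−1+t)^{−m}; (b) Φ_1(s) ≤ Φ_2(s) for all s ∈ (0,1). Moreover, if (b) holds, then ∑_{n≥1} q_n^{(1)} (n−1+t)^{α} ≤ ∑_{n≥1} q_n^{(2)} (n−1+t)^{α} for every real α < 0 and every real t > 0. -/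
/-!
Both parts go through the tree-size generating functions `Y(z) = ∑ qₙ zⁿ`. For a critical
`Φ ≠ id`, the map `s ↦ s / Φ(s)` is strictly increasing on `[0, 1]`, and `Y = z Φ(Y)` makes `Y`
its inverse; hence `Φ₁ ≤ Φ₂` on `(0, 1)` iff `Y₁ ≤ Y₂` on `(0, 1)`.

For `α < 0` the Gamma integral gives
`Γ(-α) ∑ qₙ (n - 1 + t)^α = ∫₀^∞ x^(-α-1) e^(-(t-1)x) Y(e^(-x)) dx`,
so `Y₁ ≤ Y₂` yields every moment inequality. Conversely, with `t = m / s`,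
`(m/s)^m ∑ qₙ (n - 1 + m/s)^(-m) = ∑ qₙ (1 + (n-1)s/m)^(-m) → e^s Y(e^(-s))` as `m → ∞`,
so the integer moment inequalities give back `Y₁ ≤ Y₂`.
-/

open Real Set Filter Topology MeasureTheory

noncomputable def genFun (a : ℕ → ℝ) (x : ℝ) : ℝ := ∑' n, a n * x ^ n

theorem summable_of_tsum_ne_zero {ι α : Type*} [AddCommMonoid α] [TopologicalSpace α]
    {f : ι → α} (h : ∑' i, f i ≠ 0) : Summable f :=
  by_contra fun hf => h (tsum_eq_zero_of_not_summable hf)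

structure IsProbSeq (a : ℕ → ℝ) : Prop where
  nonneg : ∀ n, 0 ≤ a n
  tsum_eq_one : ∑' n, a n = 1

namespace IsProbSeq

variable {a : ℕ → ℝ}

theorem hasSum (ha : IsProbSeq a) : HasSum a 1 :=
  ha.tsum_eq_one ▸ (summable_of_tsum_ne_zero (by simp [ha.tsum_eq_one])).hasSum

theorem summable (ha : IsProbSeq a) : Summable a := ha.hasSum.summable

theorem summable_mul_pow (ha : IsProbSeq a) {x : ℝ} (hx₀ : 0 ≤ x) (hx₁ : x ≤ 1) :
    Summable fun n => a n * x ^ n :=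
  ha.summable.of_nonneg_of_le (fun n => mul_nonneg (ha.nonneg n) (pow_nonneg hx₀ n))
    fun n => mul_le_of_le_one_right (ha.nonneg n) (pow_le_one₀ hx₀ hx₁)

theorem genFun_nonneg (ha : IsProbSeq a) {x : ℝ} (hx₀ : 0 ≤ x) : 0 ≤ genFun a x :=
  tsum_nonneg fun n => mul_nonneg (ha.nonneg n) (pow_nonneg hx₀ n)

theorem genFun_one (ha : IsProbSeq a) : genFun a 1 = 1 := by
  simpa [genFun] using ha.tsum_eq_one

theorem genFun_pos (ha : IsProbSeq a) (ha₀ : 0 < a 0) {x : ℝ} (hx₀ : 0 ≤ x) (hx₁ : x ≤ 1) :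
    0 < genFun a x :=
  (ha.summable_mul_pow hx₀ hx₁).tsum_pos (fun n => mul_nonneg (ha.nonneg n) (pow_nonneg hx₀ n)) 0
    (by simpa using ha₀)

theorem genFun_le_self (ha : IsProbSeq a) (ha₀ : a 0 = 0) {x : ℝ} (hx₀ : 0 ≤ x) (hx₁ : x ≤ 1) :
    genFun a x ≤ x :=
  calc genFun a x ≤ ∑' n, a n * x := by
        refine (ha.summable_mul_pow hx₀ hx₁).tsum_le_tsum (fun n => ?_) (ha.summable.mul_right x)
        rcases n with _ | n
        · simp [ha₀]
        · exact mul_le_mul_of_nonneg_left (pow_le_of_le_one hx₀ hx₁ n.succ_ne_zero) (ha.nonneg _)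
    _ = x := by rw [tsum_mul_right, ha.tsum_eq_one, one_mul]

end IsProbSeq

-- `p 1 < 1` excludes the degenerate law `δ₁`.
structure IsCriticalOffspring_s8 (p : ℕ → ℝ) : Prop extends IsProbSeq p where
  tsum_mul_eq_one : ∑' k : ℕ, (k : ℝ) * p k = 1
  apply_one_lt_one : p 1 < 1

theorem pow_sub_pow_le_mul_sub {a b : ℝ} (ha : 0 ≤ a) (hab : a ≤ b) (hb : b ≤ 1) (n : ℕ) :
    b ^ n - a ^ n ≤ n * (b - a) := by
  have h := abs_pow_sub_pow_le b a n
  have hmax : max |b| |a| ^ (n - 1) ≤ 1 :=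
    pow_le_one₀ (le_max_of_le_left (abs_nonneg b)) (max_le (by rwa [abs_of_nonneg (ha.trans hab)])
      (by rw [abs_of_nonneg ha]; linarith))
  rw [abs_of_nonneg (sub_nonneg.2 hab)] at h
  calc b ^ n - a ^ n ≤ |b ^ n - a ^ n| := le_abs_self _
    _ ≤ (b - a) * n * max |b| |a| ^ (n - 1) := h
    _ ≤ (b - a) * n := mul_le_of_le_one_right (by positivity) hmax
    _ = n * (b - a) := mul_comm _ _

theorem sub_mul_mul_one_sub_le {a b : ℝ} (ha : 0 ≤ a) (hab : a ≤ b) (hb : b ≤ 1) (k : ℕ) :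
    (b - a) * (a * b) * (1 - k) ≤ b * a ^ k - a * b ^ k := by
  rcases k with _ | k
  · have : a * b ≤ 1 := mul_le_one₀ (hab.trans hb) (ha.trans hab) hb
    simp only [CharP.cast_eq_zero, sub_zero, mul_one, pow_zero]
    nlinarith
  · have h := pow_sub_pow_le_mul_sub ha hab hb k
    have hab₀ : 0 ≤ a * b := mul_nonneg ha (ha.trans hab)
    calc (b - a) * (a * b) * (1 - ((k + 1 : ℕ) : ℝ)) = -(a * b) * (k * (b - a)) := by
          push_cast; ring
      _ ≤ -(a * b) * (b ^ k - a ^ k) := mul_le_mul_of_nonpos_left h (neg_nonpos.2 hab₀)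
      _ = b * a ^ (k + 1) - a * b ^ (k + 1) := by ring

namespace IsCriticalOffspring_s8

variable {p : ℕ → ℝ}

theorem hasSum_mul (hp : IsCriticalOffspring_s8 p) : HasSum (fun k : ℕ => (k : ℝ) * p k) 1 :=
  hp.tsum_mul_eq_one ▸ (summable_of_tsum_ne_zero (by simp [hp.tsum_mul_eq_one])).hasSum

theorem pos_apply_zero (hp : IsCriticalOffspring_s8 p) : 0 < p 0 := by
  by_contra! h0
  have hcentred : HasSum (fun k : ℕ => ((k : ℝ) - 1) * p k) 0 := by
    simpa [sub_mul] using hp.hasSum_mul.sub hp.hasSum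
  have hterms := (hasSum_zero_iff_of_nonneg fun k => ?_).1 hcentred
  · have hsingle : ∀ k ≠ 1, p k = 0 := fun k hk =>
      (mul_eq_zero.1 (congrFun hterms k)).resolve_left
        (sub_ne_zero.2 (by exact_mod_cast hk))
    have := hp.tsum_eq_one
    rw [tsum_eq_single 1 hsingle] at this
    exact hp.apply_one_lt_one.ne this
  · rcases k with _ | k
    · simpa using h0
    · exact mul_nonneg (by simp) (hp.nonneg _)

theorem genFun_pos (hp : IsCriticalOffspring_s8 p) {s : ℝ} (hs₀ : 0 ≤ s) (hs₁ : s ≤ 1) :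
    0 < genFun p s :=
  hp.toIsProbSeq.genFun_pos hp.pos_apply_zero hs₀ hs₁

-- `b Φ(a) - a Φ(b) = ∑ pₖ (b aᵏ - a bᵏ)` dominates `(b - a) a b ∑ (1 - k) pₖ = 0` termwise,
-- strictly at `k = 0`.
theorem strictMonoOn_div_genFun (hp : IsCriticalOffspring_s8 p) :
    StrictMonoOn (fun s => s / genFun p s) (Icc 0 1) := by
  rintro a ⟨ha₀, ha₁⟩ b ⟨hb₀, hb₁⟩ hab
  dsimp only
  rw [div_lt_div_iff₀ (hp.genFun_pos ha₀ ha₁) (hp.genFun_pos hb₀ hb₁), ← sub_pos]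
  set c := (b - a) * (a * b)
  have hlow : HasSum (fun k : ℕ => c * (p k - k * p k)) 0 := by
    simpa using (hp.hasSum.sub hp.hasSum_mul).mul_left c
  have hsum : HasSum (fun k => b * (p k * a ^ k) - a * (p k * b ^ k))
      (b * genFun p a - a * genFun p b) :=
    ((hp.summable_mul_pow ha₀ ha₁).hasSum.mul_left b).sub
      ((hp.summable_mul_pow hb₀ hb₁).hasSum.mul_left a)
  refine hasSum_lt (i := 0) (fun k => ?_) ?_ hlow hsum
  · have := mul_le_mul_of_nonneg_left (sub_mul_mul_one_sub_le ha₀ hab.le hb₁ k) (hp.nonneg k)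
    linear_combination this
  · have hab₁ : a * b < 1 := by nlinarith
    have := hp.pos_apply_zero
    simp only [CharP.cast_eq_zero, zero_mul, sub_zero, pow_zero, mul_one, c]
    nlinarith [mul_pos (mul_pos (sub_pos.2 hab) this) (sub_pos.2 hab₁)]

theorem lt_genFun (hp : IsCriticalOffspring_s8 p) {s : ℝ} (hs₀ : 0 ≤ s) (hs₁ : s < 1) :
    s < genFun p s := by
  have := hp.strictMonoOn_div_genFun ⟨hs₀, hs₁.le⟩ ⟨zero_le_one, le_rfl⟩ hs₁
  simp only [hp.genFun_one, div_one] at this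
  rwa [div_lt_one (hp.genFun_pos hs₀ hs₁.le)] at this

end IsCriticalOffspring_s8

structure IsTreeSizeLaw_s8 (p q : ℕ → ℝ) : Prop extends IsProbSeq q where
  apply_zero : q 0 = 0
  genFun_eq : ∀ z ∈ Icc (0 : ℝ) 1, genFun q z = z * genFun p (genFun q z)

namespace IsTreeSizeLaw_s8

variable {p q p₁ q₁ p₂ q₂ : ℕ → ℝ}

theorem genFun_mem_Icc (hq : IsTreeSizeLaw_s8 p q) {z : ℝ} (hz : z ∈ Icc 0 1) :
    genFun q z ∈ Icc 0 1 :=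
  ⟨hq.genFun_nonneg hz.1, (hq.genFun_le_self hq.apply_zero hz.1 hz.2).trans hz.2⟩

theorem genFun_div_genFun (hp : IsCriticalOffspring_s8 p) (hq : IsTreeSizeLaw_s8 p q) {z : ℝ}
    (hz : z ∈ Icc 0 1) : genFun q z / genFun p (genFun q z) = z := by
  have hY := hq.genFun_mem_Icc hz
  rw [div_eq_iff (hp.genFun_pos hY.1 hY.2).ne']
  exact hq.genFun_eq z hz

theorem genFun_le_of_offspring_le (hp₁ : IsCriticalOffspring_s8 p₁) (hp₂ : IsCriticalOffspring_s8 p₂)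
    (hq₁ : IsTreeSizeLaw_s8 p₁ q₁) (hq₂ : IsTreeSizeLaw_s8 p₂ q₂)
    (hΦ : ∀ s ∈ Ioo (0 : ℝ) 1, genFun p₁ s ≤ genFun p₂ s) {z : ℝ} (hz : z ∈ Ioo 0 1) :
    genFun q₁ z ≤ genFun q₂ z := by
  have hz' := Ioo_subset_Icc_self hz
  obtain hy₀ | hy₀ := (hq₁.genFun_nonneg hz'.1).eq_or_lt
  · exact hy₀ ▸ hq₂.genFun_nonneg hz'.1
  have hy₁ : genFun q₁ z < 1 := (hq₁.genFun_le_self hq₁.apply_zero hz'.1 hz'.2).trans_lt hz.2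
  rw [← hp₂.strictMonoOn_div_genFun.le_iff_le (hq₁.genFun_mem_Icc hz') (hq₂.genFun_mem_Icc hz'),
    hq₂.genFun_div_genFun hp₂ hz']
  calc genFun q₁ z / genFun p₂ (genFun q₁ z) ≤ genFun q₁ z / genFun p₁ (genFun q₁ z) :=
        div_le_div_of_nonneg_left hy₀.le (hp₁.genFun_pos hy₀.le hy₁.le) (hΦ _ ⟨hy₀, hy₁⟩)
    _ = z := hq₁.genFun_div_genFun hp₁ hz'

theorem offspring_le_of_genFun_le (hp₁ : IsCriticalOffspring_s8 p₁) (hp₂ : IsCriticalOffspring_s8 p₂)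
    (hq₁ : IsTreeSizeLaw_s8 p₁ q₁) (hq₂ : IsTreeSizeLaw_s8 p₂ q₂)
    (hY : ∀ z ∈ Ioo (0 : ℝ) 1, genFun q₁ z ≤ genFun q₂ z) {s : ℝ} (hs : s ∈ Ioo 0 1) :
    genFun p₁ s ≤ genFun p₂ s := by
  have hs' := Ioo_subset_Icc_self hs
  have hΦ₁ := hp₁.genFun_pos hs'.1 hs'.2
  have hΦ₂ := hp₂.genFun_pos hs'.1 hs'.2
  set z := s / genFun p₂ s
  have hz : z ∈ Ioo 0 1 :=
    ⟨div_pos hs.1 hΦ₂, (div_lt_one hΦ₂).2 (hp₂.lt_genFun hs.1.le hs.2)⟩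
  have hz' := Ioo_subset_Icc_self hz
  have hY₂ : genFun q₂ z = s := hp₂.strictMonoOn_div_genFun.injOn (hq₂.genFun_mem_Icc hz') hs'
    (hq₂.genFun_div_genFun hp₂ hz')
  have hz_le : z ≤ s / genFun p₁ s := by
    rw [← hq₁.genFun_div_genFun hp₁ hz']
    exact hp₁.strictMonoOn_div_genFun.monotoneOn (hq₁.genFun_mem_Icc hz') hs' (hY₂ ▸ hY z hz)
  exact (div_le_div_iff_of_pos_left hs.1 hΦ₂ hΦ₁).1 hz_le

theorem genFun_le_iff_offspring_le (hp₁ : IsCriticalOffspring_s8 p₁) (hp₂ : IsCriticalOffspring_s8 p₂)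
    (hq₁ : IsTreeSizeLaw_s8 p₁ q₁) (hq₂ : IsTreeSizeLaw_s8 p₂ q₂) :
    (∀ z ∈ Ioo (0 : ℝ) 1, genFun q₁ z ≤ genFun q₂ z) ↔
      ∀ s ∈ Ioo (0 : ℝ) 1, genFun p₁ s ≤ genFun p₂ s :=
  ⟨fun hY _ hs => offspring_le_of_genFun_le hp₁ hp₂ hq₁ hq₂ hY hs,
    fun hΦ _ hz => genFun_le_of_offspring_le hp₁ hp₂ hq₁ hq₂ hΦ hz⟩

end IsTreeSizeLaw_s8

noncomputable def shiftedMoment (q : ℕ → ℝ) (α t : ℝ) : ℝ :=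
  ∑' n : ℕ, q n * ((n : ℝ) - 1 + t) ^ α

theorem ofReal_rpow_neg_mul_Gamma {β c : ℝ} (hβ : 0 < β) (hc : 0 < c) :
    ENNReal.ofReal (c ^ (-β) * Gamma β) =
      ∫⁻ x in Ioi 0, ENNReal.ofReal (x ^ (β - 1) * exp (-(c * x))) := by
  have h := integral_rpow_mul_exp_neg_mul_Ioi hβ hc
  rw [one_div, inv_rpow hc.le, ← rpow_neg hc.le] at h
  rw [← h, ofReal_integral_eq_lintegral_ofReal]
  · exact Integrable.of_integral_ne_zero
      (h ▸ (mul_pos (rpow_pos_of_pos hc _) (Gamma_pos_of_pos hβ)).ne')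
  · filter_upwards [ae_restrict_mem measurableSet_Ioi] with x hx
    exact mul_nonneg (rpow_nonneg (le_of_lt hx) _) (exp_nonneg _)

theorem le_natCast_sub_one_add {n : ℕ} (hn : n ≠ 0) (t : ℝ) : t ≤ (n : ℝ) - 1 + t := by
  have : (1 : ℝ) ≤ n := by exact_mod_cast Nat.one_le_iff_ne_zero.2 hn
  linarith

theorem exp_neg_shift_mul (n : ℕ) (t x : ℝ) :
    exp (-(((n : ℝ) - 1 + t) * x)) = exp (-((t - 1) * x)) * exp (-x) ^ n := by
  rw [← exp_nat_mul, ← exp_add]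
  ring_nf

theorem natCast_div_pow_mul_shift_rpow_neg {m : ℕ} (hm : m ≠ 0) {s : ℝ} (hs : 0 < s) {n : ℕ}
    (hn : n ≠ 0) : ((m : ℝ) / s) ^ m * ((n : ℝ) - 1 + m / s) ^ (-(m : ℝ)) =
      ((1 + ((n : ℝ) - 1) * s / m) ^ m)⁻¹ := by
  have hm' : (0 : ℝ) < m := by exact_mod_cast Nat.pos_of_ne_zero hm
  have hc := (div_pos hm' hs).trans_le (le_natCast_sub_one_add hn ((m : ℝ) / s))
  rw [rpow_neg hc.le, rpow_natCast, ← div_eq_mul_inv, ← div_pow, ← inv_div, inv_pow]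
  congr 2
  field_simp
  ring

namespace IsProbSeq

variable {q : ℕ → ℝ}

theorem mul_rpow_shift_nonneg (hq : IsProbSeq q) (hq₀ : q 0 = 0) {α t : ℝ} (ht : 0 < t)
    (n : ℕ) : 0 ≤ q n * ((n : ℝ) - 1 + t) ^ α := by
  obtain rfl | hn := eq_or_ne n 0
  · simp [hq₀]
  · exact mul_nonneg (hq.nonneg n) (rpow_nonneg (ht.trans_le (le_natCast_sub_one_add hn t)).le _)

theorem summable_shiftedMoment (hq : IsProbSeq q) (hq₀ : q 0 = 0) {α t : ℝ} (hα : α ≤ 0)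
    (ht : 0 < t) : Summable fun n : ℕ => q n * ((n : ℝ) - 1 + t) ^ α := by
  refine (hq.summable.mul_right (t ^ α)).of_nonneg_of_le (hq.mul_rpow_shift_nonneg hq₀ ht)
    fun n => ?_
  obtain rfl | hn := eq_or_ne n 0
  · simp [hq₀]
  · exact mul_le_mul_of_nonneg_left
      (rpow_le_rpow_of_nonpos ht (le_natCast_sub_one_add hn t) hα) (hq.nonneg n)

theorem shiftedMoment_nonneg (hq : IsProbSeq q) (hq₀ : q 0 = 0) {α t : ℝ} (ht : 0 < t) :
    0 ≤ shiftedMoment q α t :=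
  tsum_nonneg (hq.mul_rpow_shift_nonneg hq₀ ht)

theorem ofReal_shiftedMoment_mul_Gamma (hq : IsProbSeq q) (hq₀ : q 0 = 0) {α t : ℝ}
    (hα : α < 0) (ht : 0 < t) :
    ENNReal.ofReal (shiftedMoment q α t) * ENNReal.ofReal (Gamma (-α)) =
      ∫⁻ x in Ioi 0,
        ENNReal.ofReal (x ^ (-α - 1) * exp (-((t - 1) * x)) * genFun q (exp (-x))) := by
  let K : ℝ → ℝ := fun x => x ^ (-α - 1) * exp (-((t - 1) * x))
  have hK : ∀ x ∈ Ioi (0 : ℝ), 0 ≤ K x := fun x hx =>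
    mul_nonneg (rpow_nonneg (le_of_lt hx) _) (exp_nonneg _)
  calc ENNReal.ofReal (shiftedMoment q α t) * ENNReal.ofReal (Gamma (-α))
      = ∑' n, ENNReal.ofReal (q n) * ENNReal.ofReal (((n : ℝ) - 1 + t) ^ α * Gamma (-α)) := by
        rw [shiftedMoment, ENNReal.ofReal_tsum_of_nonneg _ (hq.summable_shiftedMoment hq₀ hα.le ht),
          ← ENNReal.tsum_mul_right]
        · refine tsum_congr fun n => ?_
          rw [← ENNReal.ofReal_mul' (Gamma_pos_of_pos (neg_pos.2 hα)).le, mul_assoc,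
            ENNReal.ofReal_mul (hq.nonneg n)]
        · exact hq.mul_rpow_shift_nonneg hq₀ ht
    _ = ∑' n, ∫⁻ x in Ioi 0, ENNReal.ofReal (q n * exp (-x) ^ n) * ENNReal.ofReal (K x) := by
        refine tsum_congr fun n => ?_
        obtain rfl | hn := eq_or_ne n 0
        · simp [hq₀]
        have hΓ := ofReal_rpow_neg_mul_Gamma (neg_pos.2 hα)
          (ht.trans_le (le_natCast_sub_one_add hn t))
        rw [neg_neg] at hΓ
        rw [hΓ, ← lintegral_const_mul' _ _ ENNReal.ofReal_ne_top]
        refine setLIntegral_congr_fun measurableSet_Ioi fun x hx => ?_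
        rw [exp_neg_shift_mul, ← ENNReal.ofReal_mul (hq.nonneg n),
          ← ENNReal.ofReal_mul (mul_nonneg (hq.nonneg n) (pow_nonneg (exp_nonneg _) n)), mul_assoc]
        simp only [K]
        ring_nf
    _ = ∫⁻ x in Ioi 0, ENNReal.ofReal (genFun q (exp (-x))) * ENNReal.ofReal (K x) := by
        rw [← lintegral_tsum fun n => by fun_prop]
        refine setLIntegral_congr_fun measurableSet_Ioi fun x hx => ?_
        have hx₁ : exp (-x) ≤ 1 := exp_le_one_iff.2 (neg_nonpos.2 (le_of_lt hx))
        rw [ENNReal.tsum_mul_right, genFun, ENNReal.ofReal_tsum_of_nonneg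
          (fun n => mul_nonneg (hq.nonneg n) (pow_nonneg (exp_nonneg _) n))
          (hq.summable_mul_pow (exp_nonneg _) hx₁)]
    _ = _ := setLIntegral_congr_fun measurableSet_Ioi fun x hx => by
        rw [mul_comm, ENNReal.ofReal_mul (hK x hx)]

theorem tendsto_shiftedMoment_neg_natCast (hq : IsProbSeq q) (hq₀ : q 0 = 0) {s : ℝ}
    (hs : 0 < s) :
    Tendsto (fun m : ℕ => ((m : ℝ) / s) ^ m * shiftedMoment q (-m) (m / s)) atTop
      (𝓝 (exp s * genFun q (exp (-s)))) := by
  have hlim : exp s * genFun q (exp (-s)) = ∑' n, q n * exp (-(((n : ℝ) - 1) * s)) := by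
    rw [genFun, ← tsum_mul_left]
    refine tsum_congr fun n => ?_
    rw [← exp_nat_mul, mul_left_comm, ← exp_add]
    ring_nf
  rw [hlim]
  refine (tendsto_tsum_of_dominated_convergence (𝓕 := atTop) (bound := q)
    (f := fun (m n : ℕ) => q n * ((1 + ((n : ℝ) - 1) * s / m) ^ m)⁻¹)
    (g := fun n => q n * exp (-(((n : ℝ) - 1) * s))) hq.summable (fun n => ?_)
    (Eventually.of_forall fun m n => ?_)).congr' ?_
  · obtain rfl | hn := eq_or_ne n 0
    · simp [hq₀]
    rw [exp_neg]
    exact ((tendsto_one_add_div_pow_exp _).inv₀ (exp_ne_zero _)).const_mul (q n)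
  · obtain rfl | hn := eq_or_ne n 0
    · simp [hq₀]
    have hc : 0 ≤ ((n : ℝ) - 1) * s / m :=
      div_nonneg (mul_nonneg (by linarith [le_natCast_sub_one_add hn 0]) hs.le) (Nat.cast_nonneg m)
    have hpow : 1 ≤ (1 + ((n : ℝ) - 1) * s / m) ^ m := one_le_pow₀ (by linarith)
    rw [norm_mul, Real.norm_of_nonneg (hq.nonneg n), norm_inv, Real.norm_of_nonneg (by linarith)]
    exact mul_le_of_le_one_right (hq.nonneg n) (inv_le_one_of_one_le₀ hpow)
  · filter_upwards [eventually_ne_atTop 0] with m hm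
    rw [shiftedMoment, ← tsum_mul_left]
    refine tsum_congr fun n => ?_
    obtain rfl | hn := eq_or_ne n 0
    · simp [hq₀]
    · rw [mul_left_comm, natCast_div_pow_mul_shift_rpow_neg hm hs hn]

end IsProbSeq

theorem shiftedMoment_le_of_genFun_le {q₁ q₂ : ℕ → ℝ} (hq₁ : IsProbSeq q₁) (hq₁₀ : q₁ 0 = 0)
    (hq₂ : IsProbSeq q₂) (hq₂₀ : q₂ 0 = 0)
    (hY : ∀ z ∈ Ioo (0 : ℝ) 1, genFun q₁ z ≤ genFun q₂ z) {α t : ℝ} (hα : α < 0) (ht : 0 < t) :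
    shiftedMoment q₁ α t ≤ shiftedMoment q₂ α t := by
  have hΓ : ENNReal.ofReal (Gamma (-α)) ≠ 0 := by
    simpa using Gamma_pos_of_pos (neg_pos.2 hα)
  rw [← ENNReal.ofReal_le_ofReal_iff (hq₂.shiftedMoment_nonneg hq₂₀ ht),
    ← ENNReal.mul_le_mul_iff_left hΓ ENNReal.ofReal_ne_top,
    hq₁.ofReal_shiftedMoment_mul_Gamma hq₁₀ hα ht, hq₂.ofReal_shiftedMoment_mul_Gamma hq₂₀ hα ht]
  refine setLIntegral_mono' measurableSet_Ioi fun x hx => ENNReal.ofReal_le_ofReal ?_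
  refine mul_le_mul_of_nonneg_left (hY _ ⟨exp_pos _, ?_⟩) ?_
  · exact exp_lt_one_iff.2 (neg_lt_zero.2 hx)
  · exact mul_nonneg (rpow_nonneg (le_of_lt hx) _) (exp_nonneg _)

theorem genFun_le_of_shiftedMoment_le {q₁ q₂ : ℕ → ℝ} (hq₁ : IsProbSeq q₁) (hq₁₀ : q₁ 0 = 0)
    (hq₂ : IsProbSeq q₂) (hq₂₀ : q₂ 0 = 0)
    (hM : ∀ m : ℕ, 1 ≤ m → ∀ t : ℝ, 0 < t → shiftedMoment q₁ (-m) t ≤ shiftedMoment q₂ (-m) t)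
    {z : ℝ} (hz : z ∈ Ioo 0 1) : genFun q₁ z ≤ genFun q₂ z := by
  obtain ⟨s, hs, rfl⟩ : ∃ s, 0 < s ∧ exp (-s) = z :=
    ⟨-log z, neg_pos.2 (log_neg hz.1 hz.2), by rw [neg_neg, exp_log hz.1]⟩
  refine le_of_mul_le_mul_left ?_ (exp_pos s)
  refine le_of_tendsto_of_tendsto (hq₁.tendsto_shiftedMoment_neg_natCast hq₁₀ hs)
    (hq₂.tendsto_shiftedMoment_neg_natCast hq₂₀ hs) ?_
  filter_upwards [eventually_ge_atTop 1] with m hm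
  have hm' : (0 : ℝ) < m := by exact_mod_cast hm
  exact mul_le_mul_of_nonneg_left (hM m hm _ (by positivity)) (by positivity)

/-- Theorem 6.4 of the paper. For two critical offspring distributions
(each with `p 1 < 1`), the negative-integer-moment inequalities
`∑ q₁ₙ (n−1+t)^{−m} ≤ ∑ q₂ₙ (n−1+t)^{−m}` (all `m ≥ 1`, `t > 0`) hold iff `Φ₁ ≤ Φ₂`
on `(0,1)`; and in that case the inequality also holds for all real exponents `α < 0`. -/
theorem stmt8
    (p₁ p₂ : ℕ → ℝ) (hp₁ : ∀ k, 0 ≤ p₁ k) (hp₂ : ∀ k, 0 ≤ p₂ k)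
    (hpsum₁ : ∑' k, p₁ k = 1) (hpsum₂ : ∑' k, p₂ k = 1)
    (hcrit₁ : ∑' k : ℕ, (k : ℝ) * p₁ k = 1) (hcrit₂ : ∑' k : ℕ, (k : ℝ) * p₂ k = 1)
    (hp₁1 : p₁ 1 < 1) (hp₂1 : p₂ 1 < 1)
    (q₁ q₂ : ℕ → ℝ)
    (hq₁0 : q₁ 0 = 0) (hq₂0 : q₂ 0 = 0)
    (hq₁nn : ∀ n, 0 ≤ q₁ n) (hq₂nn : ∀ n, 0 ≤ q₂ n)
    (hq₁sum : ∑' n, q₁ n = 1) (hq₂sum : ∑' n, q₂ n = 1)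
    (hfix₁ : ∀ z ∈ Set.Icc (0:ℝ) 1,
      (∑' n, q₁ n * z ^ n) = z * ∑' k, p₁ k * (∑' n, q₁ n * z ^ n) ^ k)
    (hfix₂ : ∀ z ∈ Set.Icc (0:ℝ) 1,
      (∑' n, q₂ n * z ^ n) = z * ∑' k, p₂ k * (∑' n, q₂ n * z ^ n) ^ k) :
    ((∀ m : ℕ, 1 ≤ m → ∀ t : ℝ, 0 < t →
        (∑' n : ℕ, q₁ n * ((n : ℝ) - 1 + t) ^ (-(m : ℝ))) ≤
          ∑' n : ℕ, q₂ n * ((n : ℝ) - 1 + t) ^ (-(m : ℝ))) ↔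
      (∀ s ∈ Set.Ioo (0:ℝ) 1, (∑' k, p₁ k * s ^ k) ≤ ∑' k, p₂ k * s ^ k)) ∧
    ((∀ s ∈ Set.Ioo (0:ℝ) 1, (∑' k, p₁ k * s ^ k) ≤ ∑' k, p₂ k * s ^ k) →
      ∀ α : ℝ, α < 0 → ∀ t : ℝ, 0 < t →
        (∑' n : ℕ, q₁ n * ((n : ℝ) - 1 + t) ^ α) ≤
          ∑' n : ℕ, q₂ n * ((n : ℝ) - 1 + t) ^ α) := by
  have hP₁ : IsCriticalOffspring_s8 p₁ := ⟨⟨hp₁, hpsum₁⟩, hcrit₁, hp₁1⟩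
  have hP₂ : IsCriticalOffspring_s8 p₂ := ⟨⟨hp₂, hpsum₂⟩, hcrit₂, hp₂1⟩
  have hQ₁ : IsTreeSizeLaw_s8 p₁ q₁ := ⟨⟨hq₁nn, hq₁sum⟩, hq₁0, hfix₁⟩
  have hQ₂ : IsTreeSizeLaw_s8 p₂ q₂ := ⟨⟨hq₂nn, hq₂sum⟩, hq₂0, hfix₂⟩
  have hY := IsTreeSizeLaw_s8.genFun_le_iff_offspring_le hP₁ hP₂ hQ₁ hQ₂
  have hmoments (hΦ : ∀ s ∈ Ioo (0 : ℝ) 1, genFun p₁ s ≤ genFun p₂ s) {α t : ℝ} (hα : α < 0)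
      (ht : 0 < t) : shiftedMoment q₁ α t ≤ shiftedMoment q₂ α t :=
    shiftedMoment_le_of_genFun_le hQ₁.toIsProbSeq hq₁0 hQ₂.toIsProbSeq hq₂0 (hY.2 hΦ) hα ht
  refine ⟨⟨fun hM => hY.1 fun z hz => ?_, fun hΦ m hm t ht => ?_⟩,
    fun hΦ α hα t ht => hmoments hΦ hα ht⟩
  · exact genFun_le_of_shiftedMoment_le hQ₁.toIsProbSeq hq₁0 hQ₂.toIsProbSeq hq₂0 hM hz
  · exact hmoments hΦ (neg_neg_of_pos (by exact_mod_cast hm)) ht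
end
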